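/- Fix N ≥ 1 and δ ∈ {1, −1}. Let A, T be invertible N×N complex matrices with A⁻¹T = T·A* and T·T* = δ·Iₙ (* denoting entrywise complex conjugation). Let q : ℤ × ℝ → ℂ be differentiable in t and β : ℤ × ℝ → ℝ \ {0} be real-valued with β² = 1 − δ|q|². Suppose Φ : ℤ × ℝ → ℂᴺ is differentiable in t and satisfies the reduced system Φ(n+1,t) = β(n,t)⁻¹·A·Φ(n,t) + β(n,t)⁻¹·q(n,t)·T·conj(Φ(n,t)) and 2∂ₜΦ(n,t) = (A² − A⁻² − δ·q(n,t)·conj(q(n−1,t)) + δ·q(n−1,t)·conj(q(n,t)))·Φ(n,t) + 2(q(n,t)·A + q(n−1,t)·A⁻¹)·T·conj(Φ(n,t)). Then the pair (Φ, Ψ) with Ψ(n,t) := T·conj(Φ(n,t)) satisfies the full matrix system with background r := δ·conj(q): Φ(n+1) = β(n)⁻¹(AΦ(n) + q(n)Ψ(n)), Ψ(n+1) = β(n)⁻¹(r(n)Φ(n) + A⁻¹Ψ(n)), 2∂ₜΦ(n) = (A² − A⁻² + (r(n)q(n−1) − q(n)r(n−1)))Φ(n) + 2(q(n)A + q(n−1)A⁻¹)Ψ(n),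 2∂ₜΨ(n) = 2(r(n−1)A + r(n)A⁻¹)Φ(n) + (A⁻² − A² − (r(n)q(n−1) − q(n)r(n−1)))Ψ(n). -/

import Mathlib

open Matrix

/-- The matrix Lax system (discrete spectral problem plus time evolution) with data
`(A, q, r, β)`. -/
def MatrixLaxSystem (N : ℕ) (A : Matrix (Fin N) (Fin N) ℂ) (q r β : ℤ × ℝ → ℂ)
    (Φ Ψ : ℤ × ℝ → Fin N → ℂ) : Prop :=
  (∀ (n : ℤ) (t : ℝ),
      Φ (n + 1, t) = (β (n, t))⁻¹ • (A.mulVec (Φ (n, t)) + q (n, t) • Ψ (n, t))) ∧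
  (∀ (n : ℤ) (t : ℝ),
      Ψ (n + 1, t) = (β (n, t))⁻¹ • (r (n, t) • Φ (n, t) + A⁻¹.mulVec (Ψ (n, t)))) ∧
  (∀ (n : ℤ) (t : ℝ),
      (fun i => 2 * deriv (fun u => Φ (n, u) i) t) =
        (A ^ 2 - A⁻¹ ^ 2).mulVec (Φ (n, t))
          + (r (n, t) * q (n - 1, t) - q (n, t) * r (n - 1, t)) • Φ (n, t)
          + (2 : ℂ) • (q (n, t) • A + q (n - 1, t) • A⁻¹).mulVec (Ψ (n, t))) ∧
  (∀ (n : ℤ) (t : ℝ),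
      (fun i => 2 * deriv (fun u => Ψ (n, u) i) t) =
        (2 : ℂ) • (r (n - 1, t) • A + r (n, t) • A⁻¹).mulVec (Φ (n, t))
          + (A⁻¹ ^ 2 - A ^ 2).mulVec (Ψ (n, t))
          - (r (n, t) * q (n - 1, t) - q (n, t) * r (n - 1, t)) • Ψ (n, t))

/-!
Conjugation `v ↦ T (conj v)` is ℂ-antilinear. The hypothesis `A⁻¹T = TA*` says that it turns
`A` into `A⁻¹` (and hence `A⁻¹` into `A`), and `TT* = δI` says that it squares to `δ`. Applying it
to the reduced system for `Φ` therefore produces exactly the equations for `Ψ = T conj(Φ)` with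
`r = δ conj(q)`, the real coefficient `β⁻¹` passing through unchanged; the time derivative
commutes with it because it acts pointwise in `t`.
-/

variable {n : Type*} [Fintype n]

def twistedConj (T : Matrix n n ℂ) : (n → ℂ) →ₗ⋆[ℂ] (n → ℂ) :=
  (mulVecLin T).comp (starLinearEquiv ℂ).toLinearMap

theorem twistedConj_apply (T : Matrix n n ℂ) (v : n → ℂ) : twistedConj T v = T *ᵥ star v :=
  rfl

theorem star_mulVec_eq_map_mulVec_star {m R : Type*} [CommSemiring R] [StarRing R]
    (M : Matrix m n R) (v : n → R) : star (M *ᵥ v) = M.map (starRingEnd R) *ᵥ star v := by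
  funext i
  simp [mulVec, dotProduct, starRingEnd_apply]

theorem twistedConj_mulVec {T M M' : Matrix n n ℂ} (h : T * M.map (starRingEnd ℂ) = M' * T)
    (v : n → ℂ) : twistedConj T (M *ᵥ v) = M' *ᵥ twistedConj T v := by
  rw [twistedConj_apply, twistedConj_apply, star_mulVec_eq_map_mulVec_star, mulVec_mulVec, h,
    ← mulVec_mulVec]

theorem twistedConj_twistedConj [DecidableEq n] {T : Matrix n n ℂ} {δ : ℂ}
    (h : T * T.map (starRingEnd ℂ) = δ • 1) (v : n → ℂ) :
    twistedConj T (twistedConj T v) = δ • v := by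
  rw [twistedConj_apply, twistedConj_apply, star_mulVec_eq_map_mulVec_star, star_star,
    mulVec_mulVec, h, smul_mulVec, one_mulVec]

theorem twistedConj_inv_mulVec [DecidableEq n] {T A : Matrix n n ℂ} (hA : IsUnit A.det)
    (h : ∀ v, twistedConj T (A *ᵥ v) = A⁻¹ *ᵥ twistedConj T v) (v : n → ℂ) :
    twistedConj T (A⁻¹ *ᵥ v) = A *ᵥ twistedConj T v := by
  calc twistedConj T (A⁻¹ *ᵥ v)
      = A *ᵥ (A⁻¹ *ᵥ twistedConj T (A⁻¹ *ᵥ v)) := by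
        rw [mulVec_mulVec, mul_nonsing_inv A hA, one_mulVec]
    _ = A *ᵥ twistedConj T v := by
        rw [← h, mulVec_mulVec, mul_nonsing_inv A hA, one_mulVec]

theorem deriv_twistedConj_apply (T : Matrix n n ℂ) {f : ℝ → n → ℂ} {t : ℝ}
    (hf : ∀ i, DifferentiableAt ℝ (fun u => f u i) t) (i : n) :
    deriv (fun u => twistedConj T (f u) i) t = twistedConj T (fun j => deriv (fun u => f u j) t) i :=
  (HasDerivAt.fun_sum fun j _ => ((hf j).hasDerivAt.star).const_mul (T i j)).deriv

theorem reduced_system_gives_full_system_complex_general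
    (N : ℕ) (δ : ℂ) (hδ : δ = 1 ∨ δ = -1)
    (A T : Matrix (Fin N) (Fin N) ℂ)
    (hA : IsUnit A.det)
    (hAT : A⁻¹ * T = T * A.map (starRingEnd ℂ))
    (hTT : T * T.map (starRingEnd ℂ) = δ • (1 : Matrix (Fin N) (Fin N) ℂ))
    (q : ℤ × ℝ → ℂ) (β : ℤ × ℝ → ℝ)
    (Φ : ℤ × ℝ → Fin N → ℂ)
    (hΦd : ∀ (n : ℤ) (t : ℝ) (i : Fin N), DifferentiableAt ℝ (fun u => Φ (n, u) i) t)
    (hΦ1 : ∀ (n : ℤ) (t : ℝ),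
        Φ (n + 1, t) = ((β (n, t) : ℂ))⁻¹ • A.mulVec (Φ (n, t))
          + ((β (n, t) : ℂ))⁻¹ • q (n, t) • T.mulVec (star (Φ (n, t))))
    (hΦt : ∀ (n : ℤ) (t : ℝ),
        (fun i => 2 * deriv (fun u => Φ (n, u) i) t) =
          (A ^ 2 - A⁻¹ ^ 2).mulVec (Φ (n, t))
            + (-(δ * (q (n, t) * starRingEnd ℂ (q (n - 1, t))))
                + δ * (q (n - 1, t) * starRingEnd ℂ (q (n, t)))) • Φ (n, t)
            + (2 : ℂ) • (q (n, t) • A + q (n - 1, t) • A⁻¹).mulVec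
                (T.mulVec (star (Φ (n, t))))) :
    MatrixLaxSystem N A q (fun p => δ * starRingEnd ℂ (q p)) (fun p => (β p : ℂ)) Φ
      (fun p => T.mulVec (star (Φ p))) := by
  have hδ_real : starRingEnd ℂ δ = δ := by rcases hδ with rfl | rfl <;> simp
  have hJA : ∀ v, twistedConj T (A *ᵥ v) = A⁻¹ *ᵥ twistedConj T v :=
    twistedConj_mulVec hAT.symm
  have hJA_inv := twistedConj_inv_mulVec hA hJA
  have hJJ := twistedConj_twistedConj hTT
  simp only [← twistedConj_apply] at hΦ1 hΦt ⊢
  refine ⟨fun n t => ?_, fun n t => ?_, fun n t => ?_, fun n t => ?_⟩ <;> dsimp only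
  · rw [hΦ1, smul_add]
  · rw [hΦ1]
    simp only [map_add, map_smulₛₗ, hJA, hJJ, map_inv₀, Complex.conj_ofReal]
    module
  · rw [hΦt]
    module
  · have hderiv : (fun i => 2 * deriv (fun u => twistedConj T (Φ (n, u)) i) t)
        = twistedConj T (fun i => 2 * deriv (fun u => Φ (n, u) i) t) := by
      funext i
      rw [deriv_twistedConj_apply T (hΦd n t), show (fun i => 2 * deriv (fun u => Φ (n, u) i) t)
        = (2 : ℂ) • fun i => deriv (fun u => Φ (n, u) i) t from rfl, map_smulₛₗ, map_ofNat]
      rfl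
    rw [hderiv, hΦt]
    simp only [sq, ← mulVec_mulVec, sub_mulVec, add_mulVec, smul_mulVec, mulVec_smul,
      map_add, map_sub, map_smulₛₗ, hJA, hJA_inv, hJJ, _root_.map_mul, map_neg, map_ofNat,
      hδ_real, Complex.conj_conj]
    module

/-- The verification of Section 4 (classical complex reduction): if `Φ` solves the
reduced system and `Ψ := T·conj(Φ)` with `A⁻¹T = TA*`, `TT* = δI` and real nonvanishing
`β`, then `(Φ, Ψ)` solves the full matrix Lax system with background `r = δ·conj(q)`. -/
theorem reduced_system_gives_full_system_complex
    (N : ℕ) (hN : 1 ≤ N) (δ : ℂ) (hδ : δ = 1 ∨ δ = -1)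
    (A T : Matrix (Fin N) (Fin N) ℂ)
    (hA : IsUnit A.det) (hT : IsUnit T.det)
    (hAT : A⁻¹ * T = T * A.map (starRingEnd ℂ))
    (hTT : T * T.map (starRingEnd ℂ) = δ • (1 : Matrix (Fin N) (Fin N) ℂ))
    (q : ℤ × ℝ → ℂ) (β : ℤ × ℝ → ℝ)
    (hqd : ∀ (n : ℤ) (t : ℝ), DifferentiableAt ℝ (fun u => q (n, u)) t)
    (hβ0 : ∀ p : ℤ × ℝ, β p ≠ 0)
    (hβ2 : ∀ p : ℤ × ℝ, (β p : ℂ) ^ 2 = 1 - δ * (q p * starRingEnd ℂ (q p)))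
    (Φ : ℤ × ℝ → Fin N → ℂ)
    (hΦd : ∀ (n : ℤ) (t : ℝ) (i : Fin N), DifferentiableAt ℝ (fun u => Φ (n, u) i) t)
    (hΦ1 : ∀ (n : ℤ) (t : ℝ),
        Φ (n + 1, t) = ((β (n, t) : ℂ))⁻¹ • A.mulVec (Φ (n, t))
          + ((β (n, t) : ℂ))⁻¹ • q (n, t) • T.mulVec (star (Φ (n, t))))
    (hΦt : ∀ (n : ℤ) (t : ℝ),
        (fun i => 2 * deriv (fun u => Φ (n, u) i) t) =
          (A ^ 2 - A⁻¹ ^ 2).mulVec (Φ (n, t))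
            + (-(δ * (q (n, t) * starRingEnd ℂ (q (n - 1, t))))
                + δ * (q (n - 1, t) * starRingEnd ℂ (q (n, t)))) • Φ (n, t)
            + (2 : ℂ) • (q (n, t) • A + q (n - 1, t) • A⁻¹).mulVec
                (T.mulVec (star (Φ (n, t))))) :
    MatrixLaxSystem N A q (fun p => δ * starRingEnd ℂ (q p)) (fun p => (β p : ℂ)) Φ
      (fun p => T.mulVec (star (Φ p))) :=
  reduced_system_gives_full_system_complex_general N δ hδ A T hA hAT hTT q β Φ hΦd hΦ1 hΦt
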